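/- Let Q be a poset in P^ℓ_MFP satisfying the annihilator condition (a.c.). Then Q is quasi-complemented if and only if Q is weakly quasi-complemented. -/

import Mathlib

namespace ZD

variable (Q : Type*) [PartialOrder Q] [OrderBot Q]

variable {Q} in
/-- The lower cone `A^ℓ` of a subset of a poset. -/
def lCone (A : Set Q) : Set Q := {x | ∀ a ∈ A, x ≤ a}

variable {Q} in
/-- The upper cone `A^u` of a subset of a poset. -/
def uCone (A : Set Q) : Set Q := {x | ∀ a ∈ A, a ≤ x}

variable {Q} in
/-- An ideal of a poset: nonempty and `a, b ∈ I` implies `{a,b}^{uℓ} ⊆ I`. -/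
def IsIdeal (I : Set Q) : Prop :=
  I.Nonempty ∧ ∀ a ∈ I, ∀ b ∈ I, lCone (uCone {a, b}) ⊆ I

variable {Q} in
/-- A filter of a poset: nonempty and `a, b ∈ F` implies `{a,b}^{ℓu} ⊆ F`. -/
def IsPFilter (F : Set Q) : Prop :=
  F.Nonempty ∧ ∀ a ∈ F, ∀ b ∈ F, uCone (lCone {a, b}) ⊆ F

variable {Q} in
/-- An ℓ-filter: a filter such that `{a,b}^ℓ ∩ F ≠ ∅` for all `a, b ∈ F`. -/
def IsLFilter (F : Set Q) : Prop :=
  IsPFilter F ∧ ∀ a ∈ F, ∀ b ∈ F, (lCone {a, b} ∩ F).Nonempty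

variable {Q} in
/-- A prime ideal of a poset. -/
def IsPrimeIdeal (P : Set Q) : Prop :=
  IsIdeal P ∧ P ≠ Set.univ ∧ ∀ x y : Q, lCone {x, y} ⊆ P → x ∈ P ∨ y ∈ P

variable {Q} in
/-- A prime filter of a poset. -/
def IsPrimeFilter (F : Set Q) : Prop :=
  IsPFilter F ∧ F ≠ Set.univ ∧ ∀ x y : Q, uCone {x, y} ⊆ F → x ∈ F ∨ y ∈ F

variable {Q} in
/-- A maximal filter: maximal among proper filters. -/
def IsMaxFilter (F : Set Q) : Prop :=
  IsPFilter F ∧ F ≠ Set.univ ∧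
    ∀ G : Set Q, IsPFilter G → G ≠ Set.univ → F ⊆ G → F = G

variable {Q} in
/-- A maximal ℓ-filter: maximal among proper ℓ-filters. -/
def IsMaxLFilter (F : Set Q) : Prop :=
  IsLFilter F ∧ F ≠ Set.univ ∧
    ∀ G : Set Q, IsLFilter G → G ≠ Set.univ → F ⊆ G → F = G

/-- The class `P^ℓ_MFP`: every maximal filter is prime and every maximal ℓ-filter
is a maximal filter. -/
def MemPMFPl : Prop :=
  (∀ F : Set Q, IsMaxFilter F → IsPrimeFilter F) ∧
  (∀ F : Set Q, IsMaxLFilter F → IsMaxFilter F)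

variable {Q} in
/-- A minimal prime ideal of a poset. -/
def IsMinPrimeIdeal (P : Set Q) : Prop :=
  IsPrimeIdeal P ∧ ∀ P' : Set Q, IsPrimeIdeal P' → P' ⊆ P → P' = P

variable {Q} in
/-- The annihilator `x^⊥` of an element. -/
def ann (x : Q) : Set Q := {y | lCone {x, y} = {⊥}}

variable {Q} in
/-- The annihilator `A^⊥` of a subset. -/
def annSet (A : Set Q) : Set Q := {y | ∀ x ∈ A, lCone {x, y} = {⊥}}

variable {Q} in
/-- The smallest ideal `(x] ∨ (y]` containing the principal ideals `(x]` and `(y]`. -/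
def idealSup (x y : Q) : Set Q :=
  ⋂₀ {I : Set Q | IsIdeal I ∧ Set.Iic x ⊆ I ∧ Set.Iic y ⊆ I}

/-- A poset is quasi-complemented if for every `x` there is `y ≠ x` with
`{x,y}^ℓ = {0}` and `((x] ∨ (y])^⊥ = {0}`. -/
def QuasiComplemented : Prop :=
  ∀ x : Q, ∃ y : Q, y ≠ x ∧ lCone {x, y} = {⊥} ∧ annSet (idealSup x y) = {⊥}

/-- A poset is weakly quasi-complemented if for every `x` there are finitely many
`y₁, …, yₙ` (n ≥ 1), all distinct from `x`, with `x^⊥⊥ = y₁^⊥ ∩ ⋯ ∩ yₙ^⊥`. -/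
def WeaklyQuasiComplemented : Prop :=
  ∀ x : Q, ∃ s : Finset Q, s.Nonempty ∧ x ∉ s ∧ annSet (ann x) = ⋂ y ∈ s, ann y

/-- The annihilator condition (a.c.). -/
def SatisfiesAC : Prop := ∀ x y : Q, ∃ z : Q, ann x ∩ ann y = ann z

/-- The prime spectrum of a poset. -/
def Spec := {P : Set Q // IsPrimeIdeal P}

/-- The Zariski topology on `Spec Q`, whose closed sets are the sets
`V(I) = {P : I ⊆ P}` for ideals `I` of `Q`. -/
instance : TopologicalSpace (Spec Q) :=
  TopologicalSpace.generateFrom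
    {U : Set (Spec Q) | ∃ I : Set Q, IsIdeal I ∧ U = {P : Spec Q | ¬ I ⊆ P.1}}

variable {Q} in
/-- `V(x)`: the prime ideals containing `x`. -/
def zV (x : Q) : Set (Spec Q) := {P : Spec Q | x ∈ P.1}

variable {Q} in
/-- `D(x)`: the prime ideals not containing `x`. -/
def zD (x : Q) : Set (Spec Q) := {P : Spec Q | x ∉ P.1}

/-- `Min(Q)` as a subset of `Spec Q`. -/
def MinSpec : Set (Spec Q) := {P : Spec Q | ∀ P' : Set Q, IsPrimeIdeal P' → P' ⊆ P.1 → P' = P.1}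

variable {Q} in
/-- Adjacency in the zero-divisor graph `Γ(Q)`. -/
def zdAdj (x y : Q) : Prop :=
  x ≠ y ∧ x ≠ ⊥ ∧ y ≠ ⊥ ∧ lCone {x, y} = ({⊥} : Set Q)

variable {Q} in
/-- Vertices of the zero-divisor graph `Γ(Q)`: the nonzero zero-divisors. -/
def IsZDVertex (x : Q) : Prop :=
  x ≠ ⊥ ∧ ∃ y : Q, y ≠ ⊥ ∧ lCone {x, y} = ({⊥} : Set Q)

variable {Q} in
/-- `y` is a complement of `x` in `Γ(Q)`. -/
def IsComplementOf (x y : Q) : Prop :=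
  zdAdj x y ∧ ∀ c : Q, ¬ (zdAdj c x ∧ zdAdj c y)

/-- The zero-divisor graph `Γ(Q)` is complemented. -/
def GammaComplemented : Prop :=
  ∀ x : Q, IsZDVertex x → ∃ y : Q, IsComplementOf x y

/-- The zero-divisor graph `Γ(Q)` is uniquely complemented. -/
def GammaUniquelyComplemented : Prop :=
  GammaComplemented Q ∧
    ∀ a b c : Q, IsComplementOf a b → IsComplementOf a c →
      ∀ x : Q, (zdAdj x b ↔ zdAdj x c)

end ZD



/-!
Since every maximal filter is prime, each annihilator `t^⊥` is an ideal: a nonzero common lower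
bound of `t` and an element of `{a,b}^{uℓ}` with `a, b ∈ t^⊥` generates a proper filter, a maximal
filter above it is prime and so contains `a` or `b`, and then also `⊥`. Hence
`((x] ∨ (y])^⊥ = x^⊥ ∩ y^⊥`. A quasi-complement `y` of `x` then satisfies `x^⊥⊥ = y^⊥`;
conversely, by the annihilator condition `x^⊥⊥ = y₁^⊥ ∩ ⋯ ∩ yₙ^⊥` is a single `z^⊥`, and
`z` is a quasi-complement of `x` because `x^⊥ ∩ x^⊥⊥ = {0}` (and `z = x` would force `Q = {0}`).
-/

namespace ZD

section PartialOrder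

variable {Q : Type*} [PartialOrder Q]

lemma mem_lCone_pair {a b x : Q} : x ∈ lCone ({a, b} : Set Q) ↔ x ≤ a ∧ x ≤ b := by
  simp [lCone]

namespace IsPFilter

variable {F : Set Q}

lemma mem_of_le (hF : IsPFilter F) {a b : Q} (ha : a ∈ F) (hab : a ≤ b) : b ∈ F :=
  hF.2 a ha a ha fun _ hc => (hc a (by simp)).trans hab

lemma sUnion_of_isChain {c : Set (Set Q)} (hc : ∀ G ∈ c, IsPFilter G)
    (hchain : IsChain (· ⊆ ·) c) (hne : c.Nonempty) : IsPFilter (⋃₀ c) := by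
  obtain ⟨G, hG⟩ := hne
  refine ⟨(hc G hG).1.mono (Set.subset_sUnion_of_mem hG), ?_⟩
  rintro a ⟨Ga, hGa, ha⟩ b ⟨Gb, hGb, hb⟩
  rcases hchain.total hGa hGb with h | h
  · exact ((hc Gb hGb).2 a (h ha) b hb).trans (Set.subset_sUnion_of_mem hGb)
  · exact ((hc Ga hGa).2 a ha b (h hb)).trans (Set.subset_sUnion_of_mem hGa)

end IsPFilter

lemma isPFilter_Ici (s : Q) : IsPFilter (Set.Ici s) :=
  ⟨⟨s, Set.self_mem_Ici⟩, fun _ ha _ hb _ hw => hw s (mem_lCone_pair.2 ⟨ha, hb⟩)⟩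

end PartialOrder

variable {Q : Type*} [PartialOrder Q] [OrderBot Q]

lemma mem_ann_iff {x y : Q} : y ∈ ann x ↔ ∀ c, c ≤ x → c ≤ y → c = ⊥ := by
  simp only [ann, Set.mem_ofPred_eq, Set.eq_singleton_iff_unique_mem, mem_lCone_pair,
    bot_le, and_self, true_and]
  exact ⟨fun h c hx hy => h c ⟨hx, hy⟩, fun h c hc => h c hc.1 hc.2⟩

lemma mem_ann_comm {x y : Q} : y ∈ ann x ↔ x ∈ ann y := by
  simp only [mem_ann_iff]
  exact ⟨fun h c hy hx => h c hx hy, fun h c hx hy => h c hy hx⟩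

lemma mem_ann_of_le {x y z : Q} (hy : y ∈ ann x) (hzy : z ≤ y) : z ∈ ann x :=
  mem_ann_iff.2 fun c hcx hcz => mem_ann_iff.1 hy c hcx (hcz.trans hzy)

lemma eq_bot_of_mem_ann_self {x : Q} (h : x ∈ ann x) : x = ⊥ :=
  mem_ann_iff.1 h x le_rfl le_rfl

lemma bot_mem_ann (x : Q) : ⊥ ∈ ann x :=
  mem_ann_iff.2 fun _ _ hc => le_bot_iff.1 hc

lemma ann_bot : ann (⊥ : Q) = Set.univ :=
  Set.eq_univ_of_forall fun _ => mem_ann_comm.1 (bot_mem_ann _)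

lemma mem_annSet_ann_self (x : Q) : x ∈ annSet (ann x) :=
  fun _ hw => mem_ann_comm.1 hw

lemma ann_inter_annSet_ann (x : Q) : ann x ∩ annSet (ann x) = {⊥} := by
  refine Set.eq_singleton_iff_unique_mem.2 ⟨⟨bot_mem_ann x, fun w _ => ?_⟩, ?_⟩
  · exact bot_mem_ann w
  · exact fun w ⟨hw, hw'⟩ => eq_bot_of_mem_ann_self (hw' w hw)

lemma eq_bot_of_annSet_ann_eq_ann {x : Q} (h : annSet (ann x) = ann x) (y : Q) : y = ⊥ := by
  have hx : x = ⊥ := eq_bot_of_mem_ann_self (h ▸ mem_annSet_ann_self x)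
  have hy : y ∈ ann x ∩ annSet (ann x) := by
    rw [h, Set.inter_self, hx, ann_bot]
    trivial
  rwa [ann_inter_annSet_ann] at hy

lemma annSet_ann_eq_ann_of_inter_eq_bot {x y : Q} (hy : y ∈ ann x)
    (hxy : ann x ∩ ann y = {⊥}) : annSet (ann x) = ann y := by
  refine Set.Subset.antisymm (fun z hz => hz y hy) fun z hz w hw =>
    mem_ann_iff.2 fun c hcw hcz => ?_
  have hc : c ∈ ann x ∩ ann y := ⟨mem_ann_of_le hw hcw, mem_ann_of_le hz hcz⟩
  rwa [hxy] at hc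

lemma exists_ann_eq_biInter (hac : SatisfiesAC Q) {s : Finset Q} (hs : s.Nonempty) :
    ∃ z : Q, ⋂ y ∈ s, ann y = ann z := by
  classical
  induction hs using Finset.Nonempty.cons_induction with
  | singleton a => exact ⟨a, by simp⟩
  | cons a s _ _ ih =>
    obtain ⟨z, hz⟩ := ih
    obtain ⟨z', hz'⟩ := hac a z
    exact ⟨z', by rw [Finset.cons_eq_insert, Finset.set_biInter_insert, hz, hz']⟩

namespace IsPFilter

variable {F : Set Q}

lemma bot_notMem (hF : IsPFilter F) (hFu : F ≠ Set.univ) : (⊥ : Q) ∉ F :=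
  fun h => hFu (Set.eq_univ_of_forall fun _ => hF.mem_of_le h bot_le)

lemma notMem_ann (hF : IsPFilter F) (hFu : F ≠ Set.univ) {a b : Q} (ha : a ∈ F)
    (hb : b ∈ F) : b ∉ ann a := by
  intro hab
  refine hF.bot_notMem hFu (hF.2 a ha b hb ?_)
  rw [show lCone {a, b} = {⊥} from hab]
  exact fun z hz => (Set.mem_singleton_iff.1 hz).symm ▸ le_rfl

lemma exists_isMaxFilter_superset (hF : IsPFilter F) (hbot : (⊥ : Q) ∉ F) :
    ∃ M : Set Q, IsMaxFilter M ∧ F ⊆ M := by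
  obtain ⟨M, hFM, hM⟩ := zorn_subset_nonempty {G : Set Q | IsPFilter G ∧ ⊥ ∉ G}
    (fun c hc hchain hne => ⟨⋃₀ c,
      ⟨sUnion_of_isChain (fun G hG => (hc hG).1) hchain hne,
        fun ⟨G, hG, hbG⟩ => (hc hG).2 hbG⟩,
      fun _ => Set.subset_sUnion_of_mem⟩) F ⟨hF, hbot⟩
  refine ⟨M, ⟨hM.prop.1, fun h => hM.prop.2 (h ▸ trivial), fun G hG hGu hMG => ?_⟩, hFM⟩
  exact hMG.antisymm (hM.2 ⟨hG, hG.bot_notMem hGu⟩ hMG)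

end IsPFilter

lemma isIdeal_ann (hQ : ∀ F : Set Q, IsMaxFilter F → IsPrimeFilter F) (t : Q) :
    IsIdeal (ann t) := by
  refine ⟨⟨⊥, bot_mem_ann t⟩, fun a ha b hb q hq => mem_ann_iff.2 fun s hst hsq => ?_⟩
  by_contra hs
  obtain ⟨M, hM, hsM⟩ := (isPFilter_Ici s).exists_isMaxFilter_superset
    fun h => hs (le_bot_iff.1 h)
  have htM : t ∈ M := hsM hst
  have hub : uCone {a, b} ⊆ M := fun u hu => hM.1.mem_of_le (hsM hsq) (hq u hu)
  rcases (hQ M hM).2.2 a b hub with haM | hbM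
  · exact hM.1.notMem_ann hM.2.1 htM haM ha
  · exact hM.1.notMem_ann hM.2.1 htM hbM hb

lemma annSet_idealSup (hQ : ∀ F : Set Q, IsMaxFilter F → IsPrimeFilter F) (x y : Q) :
    annSet (idealSup x y) = ann x ∩ ann y := by
  refine Set.Subset.antisymm
    (fun t ht => ⟨ht x fun _ hI => hI.2.1 le_rfl, ht y fun _ hI => hI.2.2 le_rfl⟩) ?_
  rintro t ⟨htx, hty⟩ q hq
  have hIic : ∀ {x}, t ∈ ann x → Set.Iic x ⊆ ann t :=
    fun h _ hq => mem_ann_of_le (mem_ann_comm.1 h) hq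
  exact mem_ann_comm.1 (hq (ann t) ⟨isIdeal_ann hQ t, hIic htx, hIic hty⟩)

end ZD

open ZD in
/-- A poset `Q` in `P^ℓ_MFP` satisfying the annihilator condition is
quasi-complemented iff it is weakly quasi-complemented. -/
theorem stmt_11 (Q : Type*) [PartialOrder Q] [OrderBot Q] (hQ : MemPMFPl Q)
    (hac : SatisfiesAC Q) :
    QuasiComplemented Q ↔ WeaklyQuasiComplemented Q := by
  refine ⟨fun hqc x => ?_, fun hwqc x => ?_⟩
  · obtain ⟨y, hyx, hxy, hann⟩ := hqc x
    rw [annSet_idealSup hQ.1] at hann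
    exact ⟨{y}, Finset.singleton_nonempty y, by simpa using hyx.symm,
      by simpa using annSet_ann_eq_ann_of_inter_eq_bot hxy hann⟩
  · obtain ⟨s, hsne, hxs, hs⟩ := hwqc x
    obtain ⟨z, hz⟩ := exists_ann_eq_biInter hac hsne
    have hax : annSet (ann x) = ann z := hs.trans hz
    have hxz : x ∈ ann z := hax ▸ mem_annSet_ann_self x
    refine ⟨z, ?_, mem_ann_comm.1 hxz,
      by rw [annSet_idealSup hQ.1, ← hax, ann_inter_annSet_ann]⟩
    intro hzx
    rw [hzx] at hax
    obtain ⟨y, hy⟩ := hsne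
    have hyx : y = x := (eq_bot_of_annSet_ann_eq_ann hax y).trans
      (eq_bot_of_annSet_ann_eq_ann hax x).symm
    exact hxs (hyx ▸ hy)
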